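/- With circuit power ε > 0, energy budget E > 0 and epoch length t satisfying E < t(p° + ε), partial-time transmission strictly beats full-time transmission: (E/(p°+ε)) · log(1 + p°) > t · log(1 + max(E/t − ε, 0)), where p° > 0 is the unique maximizer of p ↦ log(1+p)/(p+ε). -/

import Mathlib

/-!
Full-time transmission at power `p = E/t - ε` uses up the whole budget, so it is itself a
transmission of the energy `E` at power `p`; every such transmission delivers `E` times the
energy efficiency `log (1 + p) / (p + ε)`. The budget constraint `E < t (p° + ε)` forces `p < p°`,
and `p°` is the unique maximizer of the efficiency.
-/

open Real

noncomputable def energyEfficiency (ε p : ℝ) : ℝ := log (1 + p) / (p + ε)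

theorem div_mul_log_one_add_eq_mul_energyEfficiency (ε E p : ℝ) :
    E / (p + ε) * log (1 + p) = E * energyEfficiency ε p := by
  rw [energyEfficiency, div_mul_eq_mul_div, mul_div_assoc]

theorem mul_log_one_add_eq_mul_energyEfficiency {ε E : ℝ} (t : ℝ) (hE : E ≠ 0) :
    t * log (1 + (E / t - ε)) = E * energyEfficiency ε (E / t - ε) := by
  rw [← div_mul_log_one_add_eq_mul_energyEfficiency, sub_add_cancel, div_div_cancel₀ hE]

theorem energyEfficiency_lt_of_ne {ε p p0 : ℝ}
    (hmax : ∀ p : ℝ, 0 < p → energyEfficiency ε p ≤ energyEfficiency ε p0)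
    (huniq : ∀ p : ℝ, 0 < p → energyEfficiency ε p = energyEfficiency ε p0 → p = p0)
    (hp : 0 < p) (hne : p ≠ p0) : energyEfficiency ε p < energyEfficiency ε p0 :=
  (hmax p hp).lt_of_ne fun h => hne (huniq p hp h)

theorem stmt_14_general (ε E t p0 : ℝ) (hE : 0 < E) (ht : 0 < t) (hp0 : 0 < p0)
    (hmax : ∀ p : ℝ, 0 < p → Real.log (1 + p) / (p + ε) ≤ Real.log (1 + p0) / (p0 + ε))
    (huniq : ∀ p : ℝ, 0 < p →
        Real.log (1 + p) / (p + ε) = Real.log (1 + p0) / (p0 + ε) → p = p0)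
    (hpartial : E < t * (p0 + ε)) :
    t * Real.log (1 + max (E / t - ε) 0) < E / (p0 + ε) * Real.log (1 + p0) := by
  rcases le_or_gt (E / t - ε) 0 with hp | hp
  · have hp0ε : 0 < p0 + ε := pos_of_mul_pos_right (hE.trans hpartial) ht.le
    rw [max_eq_right hp, add_zero, log_one, mul_zero]
    exact mul_pos (div_pos hE hp0ε) (log_pos (by linarith))
  · have hlt : E / t - ε < p0 := by
      rw [sub_lt_iff_lt_add, div_lt_iff₀ ht]
      linarith
    rw [max_eq_left hp.le, mul_log_one_add_eq_mul_energyEfficiency t hE.ne',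
      div_mul_log_one_add_eq_mul_energyEfficiency]
    exact mul_lt_mul_of_pos_left (energyEfficiency_lt_of_ne hmax huniq hp hlt.ne) hE

theorem stmt_14 (ε E t p0 : ℝ) (hε : 0 < ε) (hE : 0 < E) (ht : 0 < t) (hp0 : 0 < p0)
    (hmax : ∀ p : ℝ, 0 < p → Real.log (1 + p) / (p + ε) ≤ Real.log (1 + p0) / (p0 + ε))
    (huniq : ∀ p : ℝ, 0 < p →
        Real.log (1 + p) / (p + ε) = Real.log (1 + p0) / (p0 + ε) → p = p0)
    (hpartial : E < t * (p0 + ε)) :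
    t * Real.log (1 + max (E / t - ε) 0) < E / (p0 + ε) * Real.log (1 + p0) :=
  stmt_14_general ε E t p0 hE ht hp0 hmax huniq hpartial
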